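/- For an unweighted PDG N with edges L=(X,Y) and full-support cpds p_L, and any γ > 0 and nonnegative weight vector v, the score of the weighted PDG (N, α = v, β = γv) satisfies ⟦(N, v, γv)⟧_γ(μ) = γ · ( E_{w∼μ}[ Σ_L v_L log(1/p_L(y_w|x_w)) ] − H(μ) ), i.e., γ times the Gibbs free energy of the factor graph with factors φ_L(x,y) = p_L(y|x) and weights v; consequently its unique minimizer is the distribution proportional to Π_L p_L(y|x)^{v_L}. -/

import Mathlib

open scoped Classical BigOperators

noncomputable section

/-- `μ` is a probability distribution on the finite set `W`. -/
def IsDist {W : Type*} [Fintype W] (μ : W → ℝ) : Prop :=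
  (∀ w, 0 ≤ μ w) ∧ ∑ w, μ w = 1

/-- Shannon entropy `H(μ)`. -/
def entropy {W : Type*} [Fintype W] (μ : W → ℝ) : ℝ :=
  ∑ w, Real.negMulLog (μ w)

/-- Relative entropy `D(μ‖ν)`, summing over the support of `μ`. -/
def klR {W : Type*} [Fintype W] (μ ν : W → ℝ) : ℝ :=
  ∑ w, if 0 < μ w then μ w * Real.log (μ w / ν w) else 0

/-- Marginal probability of the event `f = a` under `μ`. -/
def pm {W A : Type*} [Fintype W] (μ : W → ℝ) (f : W → A) (a : A) : ℝ :=
  ∑ w, if f w = a then μ w else 0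

/-- Joint probability of `f = a` and `g = b` under `μ`. -/
def pm2 {W A B : Type*} [Fintype W] (μ : W → ℝ) (f : W → A) (g : W → B)
    (a : A) (b : B) : ℝ :=
  ∑ w, if f w = a ∧ g w = b then μ w else 0

/-- Conditional distribution of `g` given `f = a` under `μ`. -/
def condDist {W A B : Type*} [Fintype W] (μ : W → ℝ) (f : W → A) (g : W → B)
    (a : A) : B → ℝ :=
  fun b => pm2 μ f g a b / pm μ f a

/-- Conditional entropy `H(g | f)` under `μ`. -/
def condEnt {W A B : Type*} [Fintype W] [Fintype A] [Fintype B]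
    (μ : W → ℝ) (f : W → A) (g : W → B) : ℝ :=
  ∑ a, ∑ b, if 0 < pm2 μ f g a b then
    -(pm2 μ f g a b * Real.log (pm2 μ f g a b / pm μ f a)) else 0

/-- The incompatibility `Inc(μ) = Σ_L β_L E_{x∼μ_X}[D(μ(Y|X=x) ‖ p_L(x))]`. -/
def Inc {W ι : Type*} [Fintype W] [Fintype ι] {A B : ι → Type*}
    [∀ L, Fintype (A L)] [∀ L, Fintype (B L)]
    (X : (L : ι) → W → A L) (Y : (L : ι) → W → B L)
    (p : (L : ι) → A L → B L → ℝ) (β : ι → ℝ) (μ : W → ℝ) : ℝ :=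
  ∑ L, β L * ∑ a, pm μ (X L) a * klR (condDist μ (X L) (Y L) a) (p L a)

/-- Information deficiency with edge weights `α`: `IDef(μ) = Σ_L α_L H_μ(Y|X) - H(μ)`. -/
def IDefA {W ι : Type*} [Fintype W] [Fintype ι] {A B : ι → Type*}
    [∀ L, Fintype (A L)] [∀ L, Fintype (B L)]
    (X : (L : ι) → W → A L) (Y : (L : ι) → W → B L) (α : ι → ℝ) (μ : W → ℝ) : ℝ :=
  (∑ L, α L * condEnt μ (X L) (Y L)) - entropy μ

/-!
For each edge `L`, the chain rule `E_x[D(μ(Y|x) ‖ p_L(x))] + H_μ(Y|X) = E_μ[log 1/p_L(y|x)]`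
holds, so with `β = γ v` the conditional entropies coming from `Inc` and from `γ · IDef` combine
and the score becomes `γ (E_μ[U] - H(μ))` with energy `U = Σ_L v_L log 1/p_L(y|x)`.
Since `U = -log Z - log Pr` for the normalised factor product `Pr`, this equals
`γ (-log Z + D(μ ‖ Pr))`, and the strict Gibbs inequality makes `Pr` the unique minimiser.
-/

open InformationTheory

section Marginals

variable {W A B : Type*} [Fintype W] (μ : W → ℝ) (f : W → A) (g : W → B)

lemma pm2_nonneg (hμ : ∀ w, 0 ≤ μ w) (a : A) (b : B) : 0 ≤ pm2 μ f g a b :=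
  Finset.sum_nonneg fun w _ => by split <;> simp [hμ w]

lemma pm_eq_sum_pm2 [Fintype B] (a : A) : pm μ f a = ∑ b, pm2 μ f g a b := by
  unfold pm pm2
  rw [Finset.sum_comm]
  refine Finset.sum_congr rfl fun w _ => ?_
  simp [ite_and, Finset.sum_ite_eq]

lemma pm2_le_pm [Fintype B] (hμ : ∀ w, 0 ≤ μ w) (a : A) (b : B) :
    pm2 μ f g a b ≤ pm μ f a := by
  rw [pm_eq_sum_pm2 μ f g a]
  exact Finset.single_le_sum (fun b' _ => pm2_nonneg μ f g hμ a b') (Finset.mem_univ b)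

lemma sum_sum_pm2_mul [Fintype A] [Fintype B] (h : A → B → ℝ) :
    ∑ a, ∑ b, pm2 μ f g a b * h a b = ∑ w, μ w * h (f w) (g w) := by
  simp only [pm2, Finset.sum_mul, ite_mul, zero_mul]
  rw [Finset.sum_congr rfl fun a _ => Finset.sum_comm (γ := B) (α := W),
    Finset.sum_comm (γ := A) (α := W)]
  simp [ite_and]

end Marginals

lemma sum_pm_mul_klR_add_condEnt {W A B : Type*} [Fintype W] [Fintype A] [Fintype B]
    (μ : W → ℝ) (hμ : ∀ w, 0 ≤ μ w) (f : W → A) (g : W → B)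
    (q : A → B → ℝ) (hq : ∀ a b, 0 < q a b) :
    (∑ a, pm μ f a * klR (condDist μ f g a) (q a)) + condEnt μ f g
      = ∑ w, μ w * Real.log (1 / q (f w) (g w)) := by
  rw [← sum_sum_pm2_mul μ f g (fun a b => Real.log (1 / q a b))]
  unfold condEnt klR condDist
  simp only [Finset.mul_sum, ← Finset.sum_add_distrib]
  refine Finset.sum_congr rfl fun a _ => Finset.sum_congr rfl fun b _ => ?_
  rcases (pm2_nonneg μ f g hμ a b).eq_or_lt with h0 | h0
  · simp [← h0]
  have hpm : 0 < pm μ f a := h0.trans_le (pm2_le_pm μ f g hμ a b)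
  rw [if_pos (div_pos h0 hpm), if_pos h0, Real.log_div (div_pos h0 hpm).ne' (hq a b).ne',
    one_div, Real.log_inv]
  field_simp
  ring

lemma Inc_add_mul_IDefA {W ι : Type*} [Fintype W] [Fintype ι] {A B : ι → Type*}
    [∀ L, Fintype (A L)] [∀ L, Fintype (B L)]
    (X : (L : ι) → W → A L) (Y : (L : ι) → W → B L)
    (p : (L : ι) → A L → B L → ℝ) (hp : ∀ L a b, 0 < p L a b) (α : ι → ℝ) (γ : ℝ)
    (μ : W → ℝ) (hμ : ∀ w, 0 ≤ μ w) :
    Inc X Y p (fun L => γ * α L) μ + γ * IDefA X Y α μ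
      = γ * ((∑ w, μ w * ∑ L, α L * Real.log (1 / p L (X L w) (Y L w))) - entropy μ) := by
  have hedge L := sum_pm_mul_klR_add_condEnt μ hμ (X L) (Y L) (p L) (hp L)
  calc Inc X Y p (fun L => γ * α L) μ + γ * IDefA X Y α μ
      = γ * ((∑ L, α L * ((∑ a, pm μ (X L) a * klR (condDist μ (X L) (Y L) a) (p L a))
          + condEnt μ (X L) (Y L))) - entropy μ) := by
        simp only [Inc, IDefA, mul_add, Finset.sum_add_distrib, mul_sub,
          Finset.mul_sum (s := (Finset.univ : Finset ι)), mul_assoc]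
        ring
    _ = γ * ((∑ w, μ w * ∑ L, α L * Real.log (1 / p L (X L w) (Y L w))) - entropy μ) := by
        simp only [hedge, Finset.mul_sum]
        rw [Finset.sum_comm]
        simp only [mul_left_comm]

section Divergence

variable {W : Type*} [Fintype W]

lemma klR_self (ρ : W → ℝ) : klR ρ ρ = 0 :=
  Finset.sum_eq_zero fun w _ => by
    split_ifs with h
    · simp [h.ne']
    · rfl

lemma klR_eq_sum_mul_klFun {μ ρ : W → ℝ} (hμ : ∀ w, 0 ≤ μ w) (hρ : ∀ w, 0 < ρ w)
    (hsum : ∑ w, μ w = ∑ w, ρ w) :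
    klR μ ρ = ∑ w, ρ w * klFun (μ w / ρ w) := by
  have hterm w : (if 0 < μ w then μ w * Real.log (μ w / ρ w) else 0)
      = ρ w * klFun (μ w / ρ w) + (μ w - ρ w) := by
    rw [klFun_apply]
    rcases (hμ w).eq_or_lt with h0 | h0
    · simp [← h0]
    · have := (hρ w).ne'
      rw [if_pos h0]
      field_simp
      ring
  rw [klR, Finset.sum_congr rfl fun w _ => hterm w, Finset.sum_add_distrib,
    Finset.sum_sub_distrib, hsum, sub_self, add_zero]

lemma klR_pos {μ ρ : W → ℝ} (hμ : ∀ w, 0 ≤ μ w) (hρ : ∀ w, 0 < ρ w)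
    (hsum : ∑ w, μ w = ∑ w, ρ w) (hne : μ ≠ ρ) : 0 < klR μ ρ := by
  obtain ⟨w₀, hw₀⟩ := Function.ne_iff.mp hne
  have hnonneg w : 0 ≤ ρ w * klFun (μ w / ρ w) :=
    mul_nonneg (hρ w).le (klFun_nonneg (div_nonneg (hμ w) (hρ w).le))
  have hratio : μ w₀ / ρ w₀ ≠ 1 := by rwa [ne_eq, div_eq_one_iff_eq (hρ w₀).ne']
  rw [klR_eq_sum_mul_klFun hμ hρ hsum]
  have hk : 0 < klFun (μ w₀ / ρ w₀) :=
    (klFun_nonneg (div_nonneg (hμ w₀) (hρ w₀).le)).lt_of_ne'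
      (mt (klFun_eq_zero_iff (div_nonneg (hμ w₀) (hρ w₀).le)).mp hratio)
  exact Finset.sum_pos' (fun w _ => hnonneg w) ⟨w₀, Finset.mem_univ _, mul_pos (hρ w₀) hk⟩

lemma sum_mul_sub_entropy_eq_add_klR {ν ρ E : W → ℝ} {c : ℝ} (hν : IsDist ν)
    (hρ : ∀ w, 0 < ρ w) (hE : ∀ w, E w = c - Real.log (ρ w)) :
    ∑ w, ν w * E w - entropy ν = c + klR ν ρ := by
  have hc : c = ∑ w, ν w * c := by rw [← Finset.sum_mul, hν.2, one_mul]
  rw [entropy, klR, ← Finset.sum_sub_distrib, hc, ← Finset.sum_add_distrib]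
  refine Finset.sum_congr rfl fun w _ => ?_
  rcases (hν.1 w).eq_or_lt with h0 | h0
  · simp [← h0]
  · rw [if_pos h0, hE, Real.negMulLog, Real.log_div h0.ne' (hρ w).ne']
    ring

end Divergence

section Gibbs

variable {W ι : Type*} [Fintype ι]

lemma prod_rpow_pos {φ : ι → W → ℝ} (hφ : ∀ L w, 0 < φ L w) (v : ι → ℝ) (w : W) :
    0 < ∏ L, φ L w ^ v L :=
  Finset.prod_pos fun L _ => Real.rpow_pos_of_pos (hφ L w) _

variable [Fintype W]

def gibbs (φ : ι → W → ℝ) (v : ι → ℝ) (w : W) : ℝ :=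
  (∏ L, φ L w ^ v L) / ∑ w', ∏ L, φ L w' ^ v L

variable [Nonempty W] {φ : ι → W → ℝ}

lemma partition_pos (hφ : ∀ L w, 0 < φ L w) (v : ι → ℝ) : 0 < ∑ w, ∏ L, φ L w ^ v L :=
  Finset.sum_pos (fun w _ => prod_rpow_pos hφ v w) Finset.univ_nonempty

lemma gibbs_pos (hφ : ∀ L w, 0 < φ L w) (v : ι → ℝ) (w : W) : 0 < gibbs φ v w :=
  div_pos (prod_rpow_pos hφ v w) (partition_pos hφ v)

lemma gibbs_isDist (hφ : ∀ L w, 0 < φ L w) (v : ι → ℝ) : IsDist (gibbs φ v) :=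
  ⟨fun w => (gibbs_pos hφ v w).le, by
    simp only [gibbs]
    rw [← Finset.sum_div, div_self (partition_pos hφ v).ne']⟩

lemma sum_mul_log_one_div_eq_sub_log_gibbs (hφ : ∀ L w, 0 < φ L w) (v : ι → ℝ) (w : W) :
    ∑ L, v L * Real.log (1 / φ L w)
      = -Real.log (∑ w', ∏ L, φ L w' ^ v L) - Real.log (gibbs φ v w) := by
  rw [gibbs, Real.log_div (prod_rpow_pos hφ v w).ne' (partition_pos hφ v).ne',
    Real.log_prod fun L _ => (Real.rpow_pos_of_pos (hφ L w) _).ne']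
  simp only [one_div, Real.log_inv, Real.log_rpow (hφ _ w), mul_neg, Finset.sum_neg_distrib]
  ring

end Gibbs

theorem pdg_score_is_gibbs_free_energy_general {W ι : Type*} [Fintype W] [Nonempty W]
    [Fintype ι] {A B : ι → Type*} [∀ L, Fintype (A L)] [∀ L, Fintype (B L)]
    (X : (L : ι) → W → A L) (Y : (L : ι) → W → B L)
    (p : (L : ι) → A L → B L → ℝ)
    (hpos : ∀ L a b, 0 < p L a b)
    (v : ι → ℝ) (γ : ℝ) (hγ : 0 < γ) :
    let score : (W → ℝ) → ℝ := fun μ =>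
      Inc X Y p (fun L => γ * v L) μ + γ * IDefA X Y v μ
    let Z : ℝ := ∑ w, ∏ L, p L (X L w) (Y L w) ^ v L
    let Pr : W → ℝ := fun w => (∏ L, p L (X L w) (Y L w) ^ v L) / Z
    (∀ μ, IsDist μ →
      score μ =
        γ * ((∑ w, μ w * ∑ L, v L * Real.log (1 / p L (X L w) (Y L w))) -
          entropy μ)) ∧
    IsDist Pr ∧
    (∀ μ, IsDist μ → μ ≠ Pr → score Pr < score μ) := by
  intro score Z Pr
  have hφ : ∀ L w, 0 < p L (X L w) (Y L w) := fun L w => hpos L _ _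
  have hscore : ∀ μ, IsDist μ → score μ = γ * ((∑ w, μ w * ∑ L, v L *
      Real.log (1 / p L (X L w) (Y L w))) - entropy μ) :=
    fun μ hμ => Inc_add_mul_IDefA X Y p hpos v γ μ hμ.1
  have hPr : IsDist Pr := gibbs_isDist hφ v
  have hfree : ∀ μ, IsDist μ → score μ = γ * (-Real.log Z + klR μ Pr) := fun μ hμ => by
    rw [hscore μ hμ, sum_mul_sub_entropy_eq_add_klR hμ (gibbs_pos hφ v)
      (sum_mul_log_one_div_eq_sub_log_gibbs hφ v)]
    rfl
  refine ⟨hscore, hPr, fun μ hμ hne => ?_⟩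
  have hgap : 0 < klR μ Pr := klR_pos hμ.1 (gibbs_pos hφ v) (by rw [hμ.2, hPr.2]) hne
  rw [hfree μ hμ, hfree Pr hPr, klR_self]
  exact mul_lt_mul_of_pos_left (by linarith) hγ

/-- For an unweighted PDG with full-support cpds `p_L`, any `γ > 0` and nonnegative
weights `v`, the score of the weighted PDG `(N, α = v, β = γv)` equals `γ` times the
Gibbs free energy of the factor graph with factors `p_L(y|x)` and weights `v`;
consequently its unique minimizer is the distribution proportional to
`Π_L p_L(y|x)^{v_L}`. -/
theorem pdg_score_is_gibbs_free_energy {W ι : Type*} [Fintype W] [Nonempty W]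
    [Fintype ι] {A B : ι → Type*} [∀ L, Fintype (A L)] [∀ L, Fintype (B L)]
    (X : (L : ι) → W → A L) (Y : (L : ι) → W → B L)
    (p : (L : ι) → A L → B L → ℝ)
    (hp : ∀ L a, IsDist (p L a)) (hpos : ∀ L a b, 0 < p L a b)
    (v : ι → ℝ) (hv : ∀ L, 0 ≤ v L) (γ : ℝ) (hγ : 0 < γ) :
    let score : (W → ℝ) → ℝ := fun μ =>
      Inc X Y p (fun L => γ * v L) μ + γ * IDefA X Y v μ
    let Z : ℝ := ∑ w, ∏ L, p L (X L w) (Y L w) ^ v L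
    let Pr : W → ℝ := fun w => (∏ L, p L (X L w) (Y L w) ^ v L) / Z
    (∀ μ, IsDist μ →
      score μ =
        γ * ((∑ w, μ w * ∑ L, v L * Real.log (1 / p L (X L w) (Y L w))) -
          entropy μ)) ∧
    IsDist Pr ∧
    (∀ μ, IsDist μ → μ ≠ Pr → score Pr < score μ) :=
  pdg_score_is_gibbs_free_energy_general X Y p hpos v γ hγ
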